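/- arXiv:0901.1881 — 2 statements merged into one kernel-verified Lean document; each statement's English description precedes it below -/
import Mathlib

section
/- Let F₁ : ℍ → ℝ be defined on the upper half-plane ℍ = {τ ∈ ℂ : Im τ > 0} by F₁(τ) = −log(√(Im τ) · |η(τ)|²), where η(τ) = e^{iπτ/12} ∏_{n=1}^∞ (1 − e^{2πinτ}) is the Dedekind eta function. Then F₁ is smooth, and writing τ = x + iy, its Euclidean Laplacian satisfies (∂²/∂x² + ∂²/∂y²) F₁(τ) = 1/(2 y²) for all τ = x + iy ∈ ℍ. -/
open Complex

/-- The Dedekind eta function `η(τ) = e^{iπτ/12} ∏_{n=1}^∞ (1 − e^{2πinτ})`. -/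
noncomputable def dedekindEta (τ : ℂ) : ℂ :=
  Complex.exp (Real.pi * Complex.I * τ / 12) *
    ∏' n : ℕ, (1 - Complex.exp (2 * Real.pi * Complex.I * (n + 1) * τ))

/-- The genus-one topological string amplitude
`F₁(τ) = −log(√(Im τ) · |η(τ)|²)`, defined by the same formula on all of `ℂ`. -/
noncomputable def Fone (τ : ℂ) : ℝ :=
  - Real.log (Real.sqrt τ.im * ‖dedekindEta τ‖ ^ 2)


noncomputable def qfun (n : ℕ) (τ : ℂ) : ℂ :=
  Complex.exp (2 * Real.pi * Complex.I * (n + 1) * τ)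

lemma abs_qfun (n : ℕ) (τ : ℂ) :
    ‖qfun n τ‖ = Real.exp (-(2 * Real.pi * τ.im)) ^ (n + 1) := by
  rw [qfun, Complex.norm_exp, ← Real.exp_nat_mul]
  congr 1
  have h : (2 * (Real.pi : ℂ) * Complex.I * ((n : ℂ) + 1) * τ)
      = (((2 * Real.pi * ((n : ℝ) + 1)) : ℝ) : ℂ) * (Complex.I * τ) := by
    push_cast; ring
  rw [h, Complex.re_ofReal_mul]
  have : (Complex.I * τ).re = -τ.im := by simp
  rw [this]; push_cast; ring

lemma abs_qfun_le {c : ℝ} {τ : ℂ} (hc : 0 < c) (hτ : c ≤ τ.im) (n : ℕ) :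
    ‖qfun n τ‖ ≤ Real.exp (-(2 * Real.pi * c)) ^ (n + 1) := by
  rw [abs_qfun]
  apply pow_le_pow_left₀ (Real.exp_nonneg _)
  exact Real.exp_le_exp.2 (by nlinarith [Real.pi_pos])

lemma rexp_lt_one {c : ℝ} (hc : 0 < c) : Real.exp (-(2 * Real.pi * c)) < 1 :=
  Real.exp_lt_one_iff.2 (by nlinarith [Real.pi_pos])

lemma abs_qfun_lt_one {τ : ℂ} (hτ : 0 < τ.im) (n : ℕ) : ‖qfun n τ‖ < 1 := by
  calc ‖qfun n τ‖ ≤ Real.exp (-(2 * Real.pi * τ.im)) ^ (n + 1) :=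
        abs_qfun_le hτ le_rfl n
    _ < 1 := pow_lt_one₀ (Real.exp_nonneg _) (rexp_lt_one hτ) (Nat.succ_ne_zero n)

lemma one_sub_qfun_ne {τ : ℂ} (hτ : 0 < τ.im) (n : ℕ) : 1 - qfun n τ ≠ 0 := by
  intro h
  have h1 : qfun n τ = 1 := by linear_combination -h
  have := abs_qfun_lt_one hτ n
  rw [h1] at this
  simp at this

lemma one_sub_qfun_slit {τ : ℂ} (hτ : 0 < τ.im) (n : ℕ) : 1 - qfun n τ ∈ Complex.slitPlane := by
  rw [Complex.mem_slitPlane_iff]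
  left
  have h1 : |(qfun n τ).re| ≤ ‖qfun n τ‖ := Complex.abs_re_le_norm _
  have h2 := abs_qfun_lt_one hτ n
  have : (1 - qfun n τ).re = 1 - (qfun n τ).re := by simp
  rw [this]
  cases abs_le.1 h1 with
  | intro a b => linarith

lemma log_bound {c : ℝ} (hc : 0 < c) {τ : ℂ} (hτ : c ≤ τ.im) (n : ℕ) :
    ‖Complex.log (1 - qfun n τ)‖ ≤
      ((1 - Real.exp (-(2 * Real.pi * c)))⁻¹ / 2 + 1) * Real.exp (-(2 * Real.pi * c)) ^ (n + 1) := by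
  set r := Real.exp (-(2 * Real.pi * c)) with hr
  have hr0 : 0 ≤ r := Real.exp_nonneg _
  have hr1 : r < 1 := rexp_lt_one hc
  have hq : ‖qfun n τ‖ ≤ r ^ (n + 1) := abs_qfun_le hc hτ n
  have hrn1 : r ^ (n + 1) ≤ r := by
    calc r ^ (n + 1) ≤ r ^ 1 := pow_le_pow_of_le_one hr0 hr1.le (by omega)
      _ = r := pow_one r
  have hq1 : ‖-qfun n τ‖ < 1 := by
    rw [norm_neg]
    exact lt_of_le_of_lt hq (lt_of_le_of_lt hrn1 hr1)
  have key := Complex.norm_log_one_add_le hq1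
  have h1 : (1 : ℂ) + -qfun n τ = 1 - qfun n τ := by ring
  rw [h1] at key
  refine key.trans ?_
  rw [norm_neg]
  set a := ‖qfun n τ‖ with ha
  have ha0 : 0 ≤ a := norm_nonneg _
  have har : a ≤ r ^ (n+1) := hq
  have ha1 : a < 1 := lt_of_le_of_lt hq (lt_of_le_of_lt hrn1 hr1)
  have hinv : (1 - a)⁻¹ ≤ (1 - r)⁻¹ :=
    (inv_le_inv₀ (by linarith) (by linarith [le_trans har hrn1])).2 (by linarith [le_trans har hrn1])
  have h2 : a ^ 2 ≤ a := by nlinarith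
  have h3 : a ^ 2 * (1 - a)⁻¹ / 2 ≤ r ^ (n+1) * (1 - r)⁻¹ / 2 := by
    have : a ^ 2 * (1 - a)⁻¹ ≤ r ^ (n+1) * (1 - r)⁻¹ := by
      apply mul_le_mul (le_trans h2 har) hinv (inv_nonneg.2 (by linarith)) (by positivity)
    linarith
  nlinarith [h3, har]

lemma summable_geom_bound {c : ℝ} (hc : 0 < c) :
    Summable (fun n : ℕ =>
      ((1 - Real.exp (-(2 * Real.pi * c)))⁻¹ / 2 + 1) * Real.exp (-(2 * Real.pi * c)) ^ (n + 1)) := by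
  apply Summable.mul_left
  have := summable_geometric_of_lt_one (Real.exp_nonneg _) (rexp_lt_one hc)
  simpa [pow_succ, mul_comm] using this.mul_right (Real.exp (-(2 * Real.pi * c)))

lemma summable_log {τ : ℂ} (hτ : 0 < τ.im) :
    Summable (fun n : ℕ => Complex.log (1 - qfun n τ)) := by
  apply Summable.of_norm
  apply Summable.of_nonneg_of_le (fun n => norm_nonneg _) (fun n => log_bound hτ le_rfl n)
  exact summable_geom_bound hτ


noncomputable def Gfun (τ : ℂ) : ℂ := ∑' n : ℕ, Complex.log (1 - qfun n τ)

noncomputable def Hfun (τ : ℂ) : ℂ := Real.pi * Complex.I * τ / 12 + Gfun τ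

lemma isOpen_im_gt (c : ℝ) : IsOpen {τ : ℂ | c < τ.im} :=
  isOpen_lt continuous_const Complex.continuous_im

lemma qfun_differentiable (n : ℕ) : Differentiable ℂ (qfun n) := by
  apply Complex.differentiable_exp.comp
  exact (differentiable_const _).mul differentiable_id

lemma Gfun_diffOn {c : ℝ} (hc : 0 < c) :
    DifferentiableOn ℂ Gfun {τ : ℂ | c < τ.im} := by
  apply differentiableOn_tsum_of_summable_norm (summable_geom_bound hc)
    (fun n => ?_) (_root_.isOpen_im_gt c) (fun n w hw => log_bound hc (le_of_lt hw) n)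
  intro τ hτ
  have hτ' : 0 < τ.im := lt_trans hc hτ
  apply DifferentiableAt.differentiableWithinAt
  exact (Complex.differentiableAt_log (one_sub_qfun_slit hτ' n)).comp τ
    ((differentiable_const (1:ℂ)).sub (qfun_differentiable n)).differentiableAt

lemma Hfun_diffAt {τ : ℂ} (hτ : 0 < τ.im) : DifferentiableAt ℂ Hfun τ := by
  apply DifferentiableAt.add
  · exact (((differentiable_const _).mul differentiable_id).div_const _).differentiableAt
  · have := (Gfun_diffOn (half_pos hτ)).differentiableAt
      ((_root_.isOpen_im_gt (τ.im/2)).mem_nhds (show τ.im / 2 < τ.im by linarith))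
    exact this

lemma Hfun_diffOn : DifferentiableOn ℂ Hfun {τ : ℂ | 0 < τ.im} :=
  fun τ hτ => (Hfun_diffAt hτ).differentiableWithinAt

lemma Hfun_analytic : AnalyticOnNhd ℂ Hfun {τ : ℂ | 0 < τ.im} :=
  Hfun_diffOn.analyticOnNhd (_root_.isOpen_im_gt 0)

lemma eta_eq_exp {τ : ℂ} (hτ : 0 < τ.im) : dedekindEta τ = Complex.exp (Hfun τ) := by
  rw [dedekindEta, Hfun, Complex.exp_add]
  congr 1
  have this : Complex.exp (∑' n : ℕ, Complex.log (1 - qfun n τ)) = ∏' n : ℕ, (1 - qfun n τ) :=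
    Complex.cexp_tsum_eq_tprod (fun n => one_sub_qfun_ne hτ n) (summable_log hτ)
  rw [Gfun]
  rw [this]
  rfl


lemma Fone_eq {τ : ℂ} (hτ : 0 < τ.im) :
    Fone τ = -(Real.log τ.im / 2 + 2 * (Hfun τ).re) := by
  rw [Fone, eta_eq_exp hτ, Complex.norm_exp]
  rw [Real.log_mul (by positivity) (by positivity)]
  rw [Real.log_sqrt hτ.le, Real.log_pow, Real.log_exp]
  push_cast
  ring_nf

lemma Fone_contDiffOn : ContDiffOn ℝ (⊤ : ℕ∞) Fone {τ : ℂ | 0 < τ.im} := by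
  have hH : ContDiffOn ℝ (⊤ : ℕ∞) Hfun {τ : ℂ | 0 < τ.im} := by
    have := (Hfun_analytic.contDiffOn_of_completeSpace (n := (⊤ : ℕ∞))).restrict_scalars ℝ
    exact this
  have hform : ContDiffOn ℝ (⊤ : ℕ∞) (fun τ : ℂ => -(Real.log τ.im / 2 + 2 * (Hfun τ).re))
      {τ : ℂ | 0 < τ.im} := by
    apply ContDiffOn.neg
    apply ContDiffOn.add
    · apply ContDiffOn.div_const
      intro τ hτ
      exact (((Real.contDiffAt_log.2 (ne_of_gt hτ)).comp τ
        Complex.imCLM.contDiff.contDiffAt)).contDiffWithinAt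
    · exact ContDiffOn.const_smul (2:ℝ) (Complex.reCLM.contDiff.comp_contDiffOn hH) |>.congr
        (fun x _ => by simp [smul_eq_mul])
  exact hform.congr (fun τ hτ => Fone_eq hτ)

lemma hasDerivAt_re_comp {u : ℝ → ℂ} {u' : ℂ} {t : ℝ} (h : HasDerivAt u u' t) :
    HasDerivAt (fun s => (u s).re) u'.re t :=
  Complex.reCLM.hasFDerivAt.comp_hasDerivAt t h

lemma hasDerivAt_horizLine (y : ℝ) (s : ℝ) :
    HasDerivAt (fun s : ℝ => (s : ℂ) + y * Complex.I) 1 s := by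
  simpa using (Complex.ofRealCLM.hasDerivAt (x := s)).add_const ((y : ℂ) * Complex.I)

lemma hasDerivAt_vertLine (x : ℝ) (t : ℝ) :
    HasDerivAt (fun t : ℝ => (x : ℂ) + t * Complex.I) Complex.I t := by
  simpa using ((Complex.ofRealCLM.hasDerivAt (x := t)).mul_const Complex.I).const_add (x : ℂ)

lemma hasDerivAt_comp_line {f : ℂ → ℂ} {g : ℝ → ℂ} {g' : ℂ} {t : ℝ}
    (hf : DifferentiableAt ℂ f (g t)) (hg : HasDerivAt g g' t) :
    HasDerivAt (fun s => f (g s)) (g' * deriv f (g t)) t := by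
  have := HasDerivAt.scomp (𝕜 := ℝ) (𝕜' := ℂ) t hf.hasDerivAt hg
  simpa [smul_eq_mul, Function.comp_def] using this

lemma im_horiz (s y : ℝ) : ((s : ℂ) + y * Complex.I).im = y := by simp

lemma im_vert (x t : ℝ) : ((x : ℂ) + t * Complex.I).im = t := by simp

lemma deriv_Hfun_diffAt {τ : ℂ} (hτ : 0 < τ.im) : DifferentiableAt ℂ (deriv Hfun) τ :=
  ((Hfun_analytic.deriv) τ hτ).differentiableAt

/-- `F₁` is smooth on the upper half-plane and, writing `τ = x + iy`, its
Euclidean Laplacian satisfies `(∂²/∂x² + ∂²/∂y²) F₁ = 1/(2y²)` there. -/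
theorem stmt_3 :
    ContDiffOn ℝ (⊤ : ℕ∞) Fone {τ : ℂ | 0 < τ.im} ∧
    ∀ x y : ℝ, 0 < y →
      iteratedDeriv 2 (fun s : ℝ => Fone ((s : ℂ) + y * Complex.I)) x
        + iteratedDeriv 2 (fun t : ℝ => Fone ((x : ℂ) + t * Complex.I)) y
      = 1 / (2 * y ^ 2) := by
  refine ⟨Fone_contDiffOn, ?_⟩
  intro x y hy
  set τ₀ : ℂ := (x : ℂ) + y * Complex.I with hτ₀
  have hτ₀im : 0 < τ₀.im := by rw [hτ₀, im_horiz]; exact hy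
  -- Horizontal part
  have hH : iteratedDeriv 2 (fun s : ℝ => Fone ((s : ℂ) + y * Complex.I)) x
      = -(2 * (deriv (deriv Hfun) τ₀).re) := by
    have heq : (fun s : ℝ => Fone ((s : ℂ) + y * Complex.I))
        = fun s : ℝ => -(Real.log y / 2 + 2 * (Hfun ((s : ℂ) + y * Complex.I)).re) := by
      funext s
      rw [Fone_eq (by rw [im_horiz]; exact hy), im_horiz]
    rw [iteratedDeriv_succ, iteratedDeriv_one, heq]
    have hd1 : ∀ s : ℝ,
        HasDerivAt (fun s : ℝ => -(Real.log y / 2 + 2 * (Hfun ((s : ℂ) + y * Complex.I)).re))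
          (-(2 * ((1 : ℂ) * deriv Hfun ((s : ℂ) + y * Complex.I)).re)) s := by
      intro s
      have h1 := hasDerivAt_comp_line (f := Hfun)
        (Hfun_diffAt (by rw [im_horiz]; exact hy)) (hasDerivAt_horizLine y s)
      have h2 := ((hasDerivAt_re_comp h1).const_mul (2 : ℝ)).const_add (Real.log y / 2)
      simpa using h2.fun_neg
    have hder : deriv (fun s : ℝ => -(Real.log y / 2 + 2 * (Hfun ((s : ℂ) + y * Complex.I)).re))
        = fun s : ℝ => -(2 * ((1 : ℂ) * deriv Hfun ((s : ℂ) + y * Complex.I)).re) :=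
      funext fun s => (hd1 s).deriv
    rw [hder]
    have h3 := hasDerivAt_comp_line (f := deriv Hfun)
      (deriv_Hfun_diffAt (by rw [im_horiz]; exact hy)) (hasDerivAt_horizLine y x)
    have h4 := ((hasDerivAt_re_comp ((h3.const_mul (1 : ℂ)))).const_mul (2 : ℝ)).fun_neg
    rw [h4.deriv]
    rw [← hτ₀]
    ring_nf
  -- Vertical part
  have hV : iteratedDeriv 2 (fun t : ℝ => Fone ((x : ℂ) + t * Complex.I)) y
      = (y ^ 2)⁻¹ / 2 + 2 * (deriv (deriv Hfun) τ₀).re := by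
    set gF : ℝ → ℝ := fun t => -(Real.log t / 2 + 2 * (Hfun ((x : ℂ) + t * Complex.I)).re)
      with hgF
    have hloc : ∀ t : ℝ, 0 < t →
        (fun t : ℝ => Fone ((x : ℂ) + t * Complex.I)) =ᶠ[nhds t] gF := by
      intro t ht
      filter_upwards [Ioi_mem_nhds ht] with u hu
      rw [hgF]
      simp only []
      rw [Fone_eq (by rw [im_vert]; exact hu), im_vert]
    have hd1 : ∀ t : ℝ, 0 < t →
        HasDerivAt gF (-(t⁻¹ / 2 + 2 * (Complex.I * deriv Hfun ((x : ℂ) + t * Complex.I)).re)) t := by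
      intro t ht
      have hlog := (Real.hasDerivAt_log (ne_of_gt ht)).div_const 2
      have h1 := hasDerivAt_comp_line (f := Hfun)
        (Hfun_diffAt (by rw [im_vert]; exact ht)) (hasDerivAt_vertLine x t)
      have h2 := (hasDerivAt_re_comp h1).const_mul (2 : ℝ)
      exact (hlog.add h2).neg
    have hderloc : deriv (fun t : ℝ => Fone ((x : ℂ) + t * Complex.I))
        =ᶠ[nhds y] fun t : ℝ =>
          -(t⁻¹ / 2 + 2 * (Complex.I * deriv Hfun ((x : ℂ) + t * Complex.I)).re) := by
      filter_upwards [Ioi_mem_nhds hy] with t ht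
      rw [Filter.EventuallyEq.deriv_eq (hloc t ht), (hd1 t ht).deriv]
    rw [iteratedDeriv_succ, iteratedDeriv_one, hderloc.deriv_eq]
    have h3 := hasDerivAt_comp_line (f := deriv Hfun)
      (deriv_Hfun_diffAt (by rw [im_vert]; exact hy)) (hasDerivAt_vertLine x y)
    have h4 := (hasDerivAt_re_comp (h3.const_mul Complex.I)).const_mul (2 : ℝ)
    have hinv := (hasDerivAt_inv (ne_of_gt hy)).div_const 2
    have h5 := (hinv.fun_add h4).fun_neg
    rw [h5.deriv, ← hτ₀]
    have : (Complex.I * (Complex.I * deriv (deriv Hfun) τ₀)).re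
        = -(deriv (deriv Hfun) τ₀).re := by
      simp [Complex.mul_re, Complex.mul_im]
    rw [this]
    ring_nf
  rw [hH, hV]
  field_simp
  ring
end

section
/- For every τ in the upper half-plane ℍ = {τ ∈ ℂ : Im τ > 0}, one has (1/(2πi)) · η′(τ)/η(τ) = 1/24 − ∑_{n=1}^∞ c_n e^{2πinτ}, where η(τ) = e^{iπτ/12} ∏_{n=1}^∞ (1 − e^{2πinτ}) is the Dedekind eta function and c_n denotes the number of subgroups of ℤ × ℤ of index n; in particular the series on the right converges. -/
open Complex

/-- `latticeIndexCount n` is the number of (additive) subgroups of `ℤ × ℤ`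
of index `n`. -/
noncomputable def latticeIndexCount (n : ℕ) : ℕ :=
  Nat.card {H : AddSubgroup (ℤ × ℤ) // H.index = n}

/-!
Every subgroup of `ℤ × ℤ` is spanned by `(a, 0)` and `(b, d)`, where `aℤ` is its intersection with
the first axis and `dℤ` its projection to the second one (Hermite normal form); its index is `a * d`
and `b` is unique modulo `a`. Hence `c_n = ∑_{ad = n} a = σ₁(n)`, and the identity becomes
`logDeriv η = (πi/12) E₂` together with the `q`-expansion `E₂ = 1 - 24 ∑ σ₁(n) qⁿ`.
-/

open AddSubgroup ModularForm EisensteinSeries ArithmeticFunction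
open scoped ArithmeticFunction.sigma

theorem AddSubgroup.index_eq_index_comap_inl_mul_index_map_snd {G G' : Type*} [AddCommGroup G]
    [AddCommGroup G'] (H : AddSubgroup (G × G')) :
    H.index = (H.comap (AddMonoidHom.inl G G')).index * (H.map (AddMonoidHom.snd G G')).index := by
  have hker : (AddMonoidHom.snd G G').ker = (AddMonoidHom.inl G G').range := by
    ext ⟨x, y⟩
    simp [AddSubgroup.mem_prod, eq_comm]
  rw [index_comap, index_map, hker, (AddMonoidHom.snd G G').range_eq_top_of_surjective
    Prod.snd_surjective, index_top, mul_one, ← relIndex_sup_left, relIndex_mul_index le_sup_left]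

theorem Int.eq_zmultiples_index (B : AddSubgroup ℤ) : B = zmultiples (B.index : ℤ) := by
  obtain ⟨g, rfl⟩ := Int.subgroup_cyclic B
  rw [← zmultiples_eq_closure, Int.index_zmultiples, Int.zmultiples_natAbs]

/-- The lattice spanned by the columns `(a, 0)` and `(b, d)` of `!![a, b; 0, d]`. -/
def upperTriangularLattice (a : ℕ) (b : ℤ) (d : ℕ) : AddSubgroup (ℤ × ℤ) :=
  (((a : ℤ) • AddMonoidHom.fst ℤ ℤ + b • AddMonoidHom.snd ℤ ℤ).prod
    ((d : ℤ) • AddMonoidHom.snd ℤ ℤ)).range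

section upperTriangularLattice

variable {a d : ℕ} {b b' : ℤ}

theorem mem_upperTriangularLattice {p : ℤ × ℤ} :
    p ∈ upperTriangularLattice a b d ↔ ∃ s t : ℤ, s * a + t * b = p.1 ∧ t * d = p.2 := by
  simp [upperTriangularLattice, Prod.ext_iff, mul_comm]

theorem comap_inl_upperTriangularLattice (hd : d ≠ 0) :
    (upperTriangularLattice a b d).comap (AddMonoidHom.inl ℤ ℤ) = zmultiples (a : ℤ) := by
  ext x
  simp [mem_upperTriangularLattice, Int.mem_zmultiples_iff, hd, dvd_iff_exists_eq_mul_left,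
    eq_comm]

theorem map_snd_upperTriangularLattice :
    (upperTriangularLattice a b d).map (AddMonoidHom.snd ℤ ℤ) = zmultiples (d : ℤ) := by
  ext y
  simp only [mem_map, mem_upperTriangularLattice, Int.mem_zmultiples_iff]
  constructor
  · rintro ⟨p, ⟨s, t, -, ht⟩, rfl⟩
    exact ⟨t, by simp [← ht, mul_comm]⟩
  · rintro ⟨t, rfl⟩
    exact ⟨(t * b, d * t), ⟨0, t, by simp, by simp [mul_comm]⟩, rfl⟩

theorem index_comap_inl_upperTriangularLattice (hd : d ≠ 0) :
    ((upperTriangularLattice a b d).comap (AddMonoidHom.inl ℤ ℤ)).index = a := by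
  rw [comap_inl_upperTriangularLattice hd, Int.index_zmultiples, Int.natAbs_natCast]

theorem index_map_snd_upperTriangularLattice :
    ((upperTriangularLattice a b d).map (AddMonoidHom.snd ℤ ℤ)).index = d := by
  rw [map_snd_upperTriangularLattice, Int.index_zmultiples, Int.natAbs_natCast]

theorem index_upperTriangularLattice (hd : d ≠ 0) :
    (upperTriangularLattice a b d).index = a * d := by
  rw [index_eq_index_comap_inl_mul_index_map_snd, index_comap_inl_upperTriangularLattice hd,
    index_map_snd_upperTriangularLattice]

theorem upperTriangularLattice_le_of_dvd (h : (a : ℤ) ∣ b - b') :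
    upperTriangularLattice a b d ≤ upperTriangularLattice a b' d := by
  obtain ⟨k, hk⟩ := h
  intro p hp
  obtain ⟨s, t, hs, ht⟩ := mem_upperTriangularLattice.1 hp
  exact mem_upperTriangularLattice.2 ⟨s + t * k, t, by rw [← hs]; linear_combination -t * hk, ht⟩

theorem upperTriangularLattice_eq_iff (hd : d ≠ 0) :
    upperTriangularLattice a b d = upperTriangularLattice a b' d ↔ (a : ℤ) ∣ b - b' := by
  refine ⟨fun h => ?_, fun h => (upperTriangularLattice_le_of_dvd h).antisymm
    (upperTriangularLattice_le_of_dvd (dvd_sub_comm.1 h))⟩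
  have hb : ((b, d) : ℤ × ℤ) ∈ upperTriangularLattice a b' d :=
    h ▸ mem_upperTriangularLattice.2 ⟨0, 1, by simp, by simp⟩
  obtain ⟨s, t, hs, ht⟩ := mem_upperTriangularLattice.1 hb
  obtain rfl : t = 1 := by simpa [hd] using ht
  exact ⟨s, by simp at hs; linear_combination -hs⟩

end upperTriangularLattice

theorem exists_eq_upperTriangularLattice (H : AddSubgroup (ℤ × ℤ)) :
    ∃ b : ℤ, H = upperTriangularLattice (H.comap (AddMonoidHom.inl ℤ ℤ)).index b
      (H.map (AddMonoidHom.snd ℤ ℤ)).index := by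
  set a := (H.comap (AddMonoidHom.inl ℤ ℤ)).index
  set d := (H.map (AddMonoidHom.snd ℤ ℤ)).index
  have hA (x : ℤ) : (x, 0) ∈ H ↔ (a : ℤ) ∣ x := by
    rw [← Int.mem_zmultiples_iff, ← Int.eq_zmultiples_index]; rfl
  have hD (y : ℤ) : y ∈ H.map (AddMonoidHom.snd ℤ ℤ) ↔ (d : ℤ) ∣ y := by
    rw [← Int.mem_zmultiples_iff, ← Int.eq_zmultiples_index]
  obtain ⟨⟨b, _⟩, hb, rfl⟩ := (hD d).2 dvd_rfl
  refine ⟨b, le_antisymm (fun p hp => ?_) fun p hp => ?_⟩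
  · obtain ⟨t, ht⟩ := (hD p.2).1 ⟨p, hp, rfl⟩
    have hrow : (p.1 - t * b, 0) ∈ H := by
      convert H.sub_mem hp (H.zsmul_mem hb t) using 1
      ext <;> simp [ht, mul_comm]
    obtain ⟨s, hs⟩ := (hA _).1 hrow
    exact mem_upperTriangularLattice.2 ⟨s, t, by linear_combination -hs, by rw [ht, mul_comm]⟩
  · obtain ⟨s, t, hs, ht⟩ := mem_upperTriangularLattice.1 hp
    convert H.add_mem (H.zsmul_mem ((hA a).2 dvd_rfl) s) (H.zsmul_mem hb t) using 1
    ext <;> simp [← hs, ← ht]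

def upperTriangularLatticeOfIndex (n : ℕ) :
    (p : n.divisorsAntidiagonal) × ZMod (p : ℕ × ℕ).1 →
      {H : AddSubgroup (ℤ × ℤ) // H.index = n} :=
  fun x => ⟨upperTriangularLattice x.1.1.1 x.2.val x.1.1.2, by
    rw [index_upperTriangularLattice (Nat.ne_zero_of_mem_divisorsAntidiagonal x.1.2).2,
      (Nat.mem_divisorsAntidiagonal.1 x.1.2).1]⟩

theorem upperTriangularLatticeOfIndex_injective (n : ℕ) :
    Function.Injective (upperTriangularLatticeOfIndex n) := by
  rintro ⟨⟨⟨a, d⟩, hp⟩, b⟩ ⟨⟨⟨a', d'⟩, hp'⟩, b'⟩ h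
  have h : upperTriangularLattice a b.val d = upperTriangularLattice a' b'.val d' :=
    congrArg Subtype.val h
  have hd := (Nat.ne_zero_of_mem_divisorsAntidiagonal hp).2
  obtain rfl : a = a' := by
    rw [← index_comap_inl_upperTriangularLattice (a := a) (b := b.val) hd, h,
      index_comap_inl_upperTriangularLattice (Nat.ne_zero_of_mem_divisorsAntidiagonal hp').2]
  obtain rfl : d = d' := by
    rw [← index_map_snd_upperTriangularLattice (a := a) (b := b.val) (d := d), h,
      index_map_snd_upperTriangularLattice]
  have : NeZero a := ⟨(Nat.ne_zero_of_mem_divisorsAntidiagonal hp).1⟩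
  obtain rfl : b = b' := by
    simpa using (ZMod.intCast_eq_intCast_iff_dvd_sub _ _ _).2
      ((upperTriangularLattice_eq_iff hd).1 h.symm)
  rfl

theorem upperTriangularLatticeOfIndex_surjective {n : ℕ} (hn : n ≠ 0) :
    Function.Surjective (upperTriangularLatticeOfIndex n) := by
  rintro ⟨H, hH⟩
  obtain ⟨b, hb⟩ := exists_eq_upperTriangularLattice H
  set a := (H.comap (AddMonoidHom.inl ℤ ℤ)).index
  set d := (H.map (AddMonoidHom.snd ℤ ℤ)).index
  have hp : (a, d) ∈ n.divisorsAntidiagonal :=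
    Nat.mem_divisorsAntidiagonal.2 ⟨by rw [← hH, index_eq_index_comap_inl_mul_index_map_snd], hn⟩
  have : NeZero a := ⟨(Nat.ne_zero_of_mem_divisorsAntidiagonal hp).1⟩
  refine ⟨⟨⟨(a, d), hp⟩, b⟩, Subtype.ext ?_⟩
  change upperTriangularLattice a ((b : ZMod a).val : ℤ) d = H
  rw [hb, upperTriangularLattice_eq_iff (Nat.ne_zero_of_mem_divisorsAntidiagonal hp).2,
    ← ZMod.intCast_eq_intCast_iff_dvd_sub]
  simp

theorem natCard_addSubgroup_index_eq_sigma {n : ℕ} (hn : n ≠ 0) :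
    Nat.card {H : AddSubgroup (ℤ × ℤ) // H.index = n} = σ 1 n := by
  have (p : n.divisorsAntidiagonal) : NeZero (p : ℕ × ℕ).1 :=
    ⟨(Nat.ne_zero_of_mem_divisorsAntidiagonal p.2).1⟩
  rw [← Nat.card_eq_of_bijective _ ⟨upperTriangularLatticeOfIndex_injective n,
      upperTriangularLatticeOfIndex_surjective hn⟩,
    Nat.card_eq_fintype_card, Fintype.card_sigma, sigma_one_apply,
    ← Nat.sum_divisorsAntidiagonal fun a _ => a]
  simpa using Finset.sum_attach n.divisorsAntidiagonal Prod.fst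

theorem dedekindEta_eq_eta : dedekindEta = ModularForm.eta := by
  ext τ
  simp only [dedekindEta, ModularForm.eta, eta_q_eq_cexp, Function.Periodic.qParam]
  congr 2
  push_cast
  ring

theorem logDeriv_dedekindEta (τ : UpperHalfPlane) :
    logDeriv dedekindEta τ = Real.pi * I / 12 *
      (1 - 24 * ∑' n : ℕ, (σ 1 (n + 1) : ℂ) * cexp (2 * Real.pi * I * τ) ^ (n + 1)) := by
  rw [dedekindEta_eq_eta, logDeriv_eta_eq_E2, E2_eq_tsum_cexp,
    tsum_pnat_eq_tsum_succ (f := fun n ↦ (σ 1 n : ℂ) * cexp (2 * Real.pi * I * τ) ^ n)]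

/-- For every `τ` in the upper half-plane,
`(1/(2πi)) η′(τ)/η(τ) = 1/24 − ∑_{n=1}^∞ c_n e^{2πinτ}`, where `c_n` is the
number of subgroups of `ℤ × ℤ` of index `n`; in particular the series on the
right converges. -/
theorem stmt_8 (τ : ℂ) (hτ : 0 < τ.im) :
    Summable (fun n : ℕ => (latticeIndexCount (n + 1) : ℂ) *
      Complex.exp (2 * Real.pi * Complex.I * (n + 1) * τ)) ∧
    (1 / (2 * Real.pi * Complex.I)) * (deriv dedekindEta τ / dedekindEta τ)
      = 1 / 24 - ∑' n : ℕ, (latticeIndexCount (n + 1) : ℂ) *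
          Complex.exp (2 * Real.pi * Complex.I * (n + 1) * τ) := by
  let z : UpperHalfPlane := ⟨τ, hτ⟩
  have hterm : (fun n : ℕ => (latticeIndexCount (n + 1) : ℂ) *
      cexp (2 * Real.pi * I * (n + 1) * τ)) =
      fun n => (σ 1 (n + 1) : ℂ) * cexp (2 * Real.pi * I * z) ^ (n + 1) := by
    ext n
    rw [latticeIndexCount, natCard_addSubgroup_index_eq_sigma n.succ_ne_zero, ← eta_q_eq_cexp,
      eta_q_eq_pow]
  refine ⟨hterm ▸ (summable_nat_add_iff 1).2 (summable_sigma_mul_cexp_pow one_le_two z), ?_⟩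
  rw [hterm, ← logDeriv_apply, logDeriv_dedekindEta z]
  field_simp
  ring
end
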